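/- Let C(G) be the full cone over a finite graph G with cone point p, and let f be a function on C(G) with f(p) = 0. Then ΔᶜΓ₁ᶜ(f)(p) = Σ_{y ∈ V} Γ₁(f)(y) - ((|V| - 1)/2) Σ_{y ∈ V} f(y)². -/

import Mathlib

open Finset

variable {V : Type*}

noncomputable def lap (G : SimpleGraph V) [∀ v, Fintype (G.neighborSet v)] (f : V → ℝ) (x : V) : ℝ :=
  ∑ y ∈ G.neighborFinset x, (f y - f x)

noncomputable def gam (G : SimpleGraph V) [∀ v, Fintype (G.neighborSet v)] (f g : V → ℝ) (x : V) : ℝ :=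
  (1/2) * ∑ y ∈ G.neighborFinset x, (f y - f x) * (g y - g x)

noncomputable def gam1 (G : SimpleGraph V) [∀ v, Fintype (G.neighborSet v)] (f : V → ℝ) (x : V) : ℝ :=
  (1/2) * ∑ y ∈ G.neighborFinset x, (f y - f x)^2

noncomputable def gam2 (G : SimpleGraph V) [∀ v, Fintype (G.neighborSet v)] (f : V → ℝ) (x : V) : ℝ :=
  (1/2) * (lap G (gam1 G f) x - 2 * gam G f (lap G f) x)

def cone (G : SimpleGraph V) : SimpleGraph (Option V) where
  Adj a b := a ≠ b ∧ ∀ x ∈ a, ∀ y ∈ b, G.Adj x y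
  symm := ⟨fun _ _ h => ⟨h.1.symm, fun x hx y hy => (h.2 y hy x hx).symm⟩⟩
  loopless := ⟨fun _ h => h.1 rfl⟩

instance (G : SimpleGraph V) [DecidableEq V] [DecidableRel G.Adj] :
    DecidableRel (cone G).Adj := fun a b =>
  inferInstanceAs (Decidable (a ≠ b ∧ ∀ x ∈ a, ∀ y ∈ b, G.Adj x y))

section Cone

variable (G : SimpleGraph V)

@[simp]
lemma cone_adj_none_some (v : V) : (cone G).Adj none (some v) :=
  ⟨(Option.some_ne_none v).symm, by simp⟩

@[simp]
lemma cone_adj_some_none (v : V) : (cone G).Adj (some v) none :=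
  (cone_adj_none_some G v).symm

@[simp]
lemma cone_adj_some_some (u v : V) : (cone G).Adj (some u) (some v) ↔ G.Adj u v :=
  ⟨fun h => h.2 u rfl v rfl, fun h => ⟨by simpa using h.ne, by simpa using h⟩⟩

variable [Fintype V] [DecidableEq V] [DecidableRel G.Adj]

lemma cone_neighborFinset_none :
    (cone G).neighborFinset none = univ.map .some := by
  ext y
  cases y <;> simp

lemma cone_neighborFinset_some (v : V) :
    (cone G).neighborFinset (some v) = insert none ((G.neighborFinset v).map .some) := by
  ext y
  cases y <;> simp

lemma lap_cone_none (g : Option V → ℝ) :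
    lap (cone G) g none = ∑ y : V, (g (some y) - g none) := by
  rw [lap, cone_neighborFinset_none, sum_map]
  rfl

lemma gam1_cone_none (f : Option V → ℝ) :
    gam1 (cone G) f none = (1/2) * ∑ y : V, (f (some y) - f none)^2 := by
  rw [gam1, cone_neighborFinset_none, sum_map]
  rfl

lemma gam1_cone_some (f : Option V → ℝ) (v : V) :
    gam1 (cone G) f (some v)
      = gam1 G (fun z => f (some z)) v + (1/2) * (f none - f (some v))^2 := by
  rw [gam1, cone_neighborFinset_some, sum_insert (by simp), sum_map, gam1]
  simp only [Function.Embedding.some_apply]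
  ring

end Cone

theorem stmt5 (G : SimpleGraph V) [Fintype V] [DecidableEq V] [DecidableRel G.Adj]
    (f : Option V → ℝ) (hf : f none = 0) :
    lap (cone G) (gam1 (cone G) f) none
      = ∑ y : V, gam1 G (fun z => f (some z)) y
        - ((Fintype.card V : ℝ) - 1) / 2 * ∑ y : V, (f (some y))^2 := by
  simp only [lap_cone_none, gam1_cone_some, gam1_cone_none, hf, zero_sub, sub_zero, neg_sq]
  rw [sum_sub_distrib, sum_add_distrib, ← mul_sum, sum_const, nsmul_eq_mul, card_univ]
  ring
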